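/- arXiv:1311.2618 — 2 statements merged into one kernel-verified Lean document; each statement's English description precedes it below -/
import Mathlib

section
/- For any simple graph G and any subset X of its vertices, the cut-rank function satisfies the submodular inequality: cutrk_G(X) + cutrk_G(Y) ≥ cutrk_G(X ∩ Y) + cutrk_G(X ∪ Y) for all X, Y ⊆ V(G). -/
/-!
Fix a square matrix `M` over a field and let `F S` be the span of the unit vectors `e j` and the
columns `M.col j` for `j ∈ S`, i.e. of the columns indexed by `S` in both blocks of `[I | M]`.
Restricting to the coordinates in `X` kills exactly the `e j` with `j ∉ X` and maps the columns
in `Xᶜ` onto those of `M[X, Xᶜ]`, so `dim F Xᶜ = rank M[X, Xᶜ] + |Xᶜ|`. Since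
`F (S ∪ T) = F S ⊔ F T` and `F (S ∩ T) ≤ F S ⊓ F T`, the dimension formula for `⊔` and `⊓` makes
`S ↦ dim F S` submodular, and the terms `|Xᶜ|` are modular.
-/

/-- The cut-rank of `X`: the rank over GF(2) of the adjacency submatrix
`A(G)[X, V \\ X]`. -/
noncomputable def cutRank {V : Type} [Fintype V] [DecidableEq V]
    (G : SimpleGraph V) (X : Finset V) : ℕ := by
  classical
  exact Matrix.rank (Matrix.of fun (i : X) (j : (Xᶜ : Finset V)) =>
    if G.Adj (i : V) (j : V) then (1 : ZMod 2) else 0)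

open Module Submodule LinearMap

theorem Submodule.finrank_inf_add_finrank_sup_le_of_map_sup {α K E : Type*} [Lattice α]
    [DivisionRing K] [AddCommGroup E] [Module K E] [FiniteDimensional K E]
    (F : α → Submodule K E) (hF : ∀ a b, F (a ⊔ b) = F a ⊔ F b) (a b : α) :
    finrank K (F (a ⊓ b)) + finrank K (F (a ⊔ b)) ≤ finrank K (F a) + finrank K (F b) := by
  have hmono : Monotone F := fun c d h => by
    rw [← sup_eq_right.mpr h, hF]; exact le_sup_left
  have hinf : F (a ⊓ b) ≤ F a ⊓ F b := le_inf (hmono inf_le_left) (hmono inf_le_right)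
  calc finrank K (F (a ⊓ b)) + finrank K (F (a ⊔ b))
      ≤ finrank K ↥(F a ⊓ F b) + finrank K ↥(F a ⊔ F b) := by
        rw [hF]; gcongr; exact Submodule.finrank_mono hinf
    _ = finrank K (F a) + finrank K (F b) := by
        rw [add_comm, finrank_sup_add_finrank_inf_eq]

theorem Submodule.finrank_map_add_finrank_ker {K E E' : Type*} [DivisionRing K]
    [AddCommGroup E] [Module K E] [AddCommGroup E'] [Module K E'] [FiniteDimensional K E]
    (f : E →ₗ[K] E') {p : Submodule K E} (h : ker f ≤ p) :
    finrank K (p.map f) + finrank K (ker f) = finrank K p := by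
  rw [← range_domRestrict, ← (comapSubtypeEquivOfLe h).finrank_eq, ← ker_domRestrict]
  exact finrank_range_add_finrank_ker _

theorem LinearMap.ker_funLeft_subtype_val {K V : Type*} [Semiring K] [Fintype V] [DecidableEq V]
    (X : Finset V) :
    ker (funLeft K K ((↑) : X → V)) = ⨆ j ∈ Xᶜ, range (LinearMap.single K (fun _ : V => K) j) := by
  have h := iSup_range_single_eq_iInf_ker_proj K (fun _ : V => K)
    (isCompl_compl (x := (Xᶜ : Set V))) (Set.toFinite _)
  simp only [compl_compl, ← Finset.coe_compl, Finset.mem_coe] at h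
  rw [h]
  ext f
  simp [funext_iff, funLeft]

namespace Matrix

section Semiring

variable {K V : Type*} [Semiring K] [DecidableEq V]

def augmentedColSpan (M : Matrix V V K) (S : Finset V) : Submodule K (V → K) :=
  (⨆ j ∈ S, range (LinearMap.single K (fun _ : V => K) j)) ⊔ span K (M.col '' S)

theorem augmentedColSpan_union (M : Matrix V V K) (S T : Finset V) :
    M.augmentedColSpan (S ∪ T) = M.augmentedColSpan S ⊔ M.augmentedColSpan T := by
  rw [augmentedColSpan, Finset.iSup_union, Finset.coe_union, Set.image_union, span_union,
    sup_sup_sup_comm]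
  rfl

end Semiring

variable {K V : Type*} [Field K] [Fintype V] [DecidableEq V]

noncomputable def cutRank (M : Matrix V V K) (X : Finset V) : ℕ :=
  (M.submatrix ((↑) : X → V) ((↑) : ↥Xᶜ → V)).rank

theorem finrank_augmentedColSpan_compl (M : Matrix V V K) (X : Finset V) :
    finrank K (M.augmentedColSpan Xᶜ) = M.cutRank X + Xᶜ.card := by
  set π := funLeft K K ((↑) : X → V)
  have hF : M.augmentedColSpan Xᶜ = span K (M.col '' ↑Xᶜ) ⊔ ker π := by
    rw [augmentedColSpan, ker_funLeft_subtype_val, sup_comm]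
  have hmap : (M.augmentedColSpan Xᶜ).map π =
      span K (Set.range (M.submatrix ((↑) : X → V) ((↑) : ↥Xᶜ → V)).col) := by
    rw [hF, Submodule.map_sup, le_ker_iff_map.mp le_rfl, sup_bot_eq, Submodule.map_span,
      Set.image_image, Set.image_eq_range]
    rfl
  have hker : finrank K (ker π) = Xᶜ.card := by
    have := finrank_range_add_finrank_ker π
    rw [range_eq_top.mpr (funLeft_surjective_of_injective _ _ _ Subtype.val_injective)] at this
    simp only [finrank_top, Module.finrank_fintype_fun_eq_card, Fintype.card_coe] at this
    rw [Finset.card_compl]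
    omega
  rw [← finrank_map_add_finrank_ker π (hF ▸ le_sup_right), hmap, cutRank,
    rank_eq_finrank_span_cols, hker]

theorem cutRank_submodular (M : Matrix V V K) (X Y : Finset V) :
    M.cutRank (X ∩ Y) + M.cutRank (X ∪ Y) ≤ M.cutRank X + M.cutRank Y := by
  have h := finrank_inf_add_finrank_sup_le_of_map_sup M.augmentedColSpan
    M.augmentedColSpan_union Xᶜ Yᶜ
  have hcard := Finset.card_union_add_card_inter Xᶜ Yᶜ
  rw [Finset.inf_eq_inter, Finset.sup_eq_union, ← Finset.compl_union, ← Finset.compl_inter] at h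
  rw [← Finset.compl_union, ← Finset.compl_inter] at hcard
  simp only [finrank_augmentedColSpan_compl] at h
  omega

end Matrix

theorem SimpleGraph.cutRank_eq_cutRank_adjMatrix {V : Type} [Fintype V] [DecidableEq V]
    (G : SimpleGraph V) [DecidableRel G.Adj] (X : Finset V) :
    cutRank G X = (G.adjMatrix (ZMod 2)).cutRank X := by
  rw [cutRank, Matrix.cutRank]
  congr 1
  ext i j
  simp [SimpleGraph.adjMatrix_apply]

theorem cutRank_submodular {V : Type} [Fintype V] [DecidableEq V]
    (G : SimpleGraph V) (X Y : Finset V) :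
    cutRank G (X ∩ Y) + cutRank G (X ∪ Y) ≤ cutRank G X + cutRank G Y := by
  classical
  simp only [G.cutRank_eq_cutRank_adjMatrix]
  exact (G.adjMatrix (ZMod 2)).cutRank_submodular X Y
end

section
/- Every graph G ∈ Δ_k with k ≥ 1 has a unique triangle v_1v_2v_3 such that deleting the three triangle edges leaves exactly three components, each belonging to Δ_{k-1}. -/
/-!
Deleting the triangle `v₁v₂v₃` that builds `Δ(G₁, G₂, G₃)` leaves exactly the disjoint union
`G₁ ⊕ G₂ ⊕ G₃`, so this triangle is a main triangle. Every other triangle lies inside one part,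
say `G₁` (the cyclic symmetry of the construction reduces the other parts to this one). Deleting
it keeps `G₂`, `G₃` and the edge `v₂v₃`, so one component has at least `4·3^(k-1)` vertices,
whereas every graph in `Δ_{k-1}` has exactly `2·3^(k-1)`.
-/

/-- The delta composition of three graphs: disjoint union plus a triangle
`v₁v₂v₃` with one vertex in each part. -/
def deltaComp {V₁ V₂ V₃ : Type} (G₁ : SimpleGraph V₁) (G₂ : SimpleGraph V₂)
    (G₃ : SimpleGraph V₃) (v₁ : V₁) (v₂ : V₂) (v₃ : V₃) :
    SimpleGraph (V₁ ⊕ V₂ ⊕ V₃) where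
  Adj x y := match x, y with
    | .inl a, .inl b => G₁.Adj a b
    | .inr (.inl a), .inr (.inl b) => G₂.Adj a b
    | .inr (.inr a), .inr (.inr b) => G₃.Adj a b
    | .inl a, .inr (.inl b) => a = v₁ ∧ b = v₂
    | .inr (.inl a), .inl b => a = v₂ ∧ b = v₁
    | .inl a, .inr (.inr b) => a = v₁ ∧ b = v₃
    | .inr (.inr a), .inl b => a = v₃ ∧ b = v₁
    | .inr (.inl a), .inr (.inr b) => a = v₂ ∧ b = v₃
    | .inr (.inr a), .inr (.inl b) => a = v₃ ∧ b = v₂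
  symm := by
    constructor
    rintro (a|a|a) (b|b|b) h
    · exact G₁.adj_symm h
    · exact ⟨h.2, h.1⟩
    · exact ⟨h.2, h.1⟩
    · exact ⟨h.2, h.1⟩
    · exact G₂.adj_symm h
    · exact ⟨h.2, h.1⟩
    · exact ⟨h.2, h.1⟩
    · exact ⟨h.2, h.1⟩
    · exact G₃.adj_symm h
  loopless := by constructor; rintro (a|a|a) h <;> exact (SimpleGraph.irrefl _) h

/-- `InDelta k G` means `G` belongs to the class `Δ_k` (up to isomorphism):
`Δ_0 = {K₂}` and `Δ_k` is the set of delta compositions of three graphs in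
`Δ_{k-1}`. -/
inductive InDelta : ℕ → {V : Type} → SimpleGraph V → Prop
  | base {V : Type} (G : SimpleGraph V)
      (e : Nonempty (G ≃g (⊤ : SimpleGraph (Fin 2)))) : InDelta 0 G
  | comp {k : ℕ} {V₁ V₂ V₃ V : Type} {G₁ : SimpleGraph V₁} {G₂ : SimpleGraph V₂}
      {G₃ : SimpleGraph V₃} (G : SimpleGraph V) (v₁ : V₁) (v₂ : V₂) (v₃ : V₃)
      (h₁ : InDelta k G₁) (h₂ : InDelta k G₂) (h₃ : InDelta k G₃)
      (e : Nonempty (G ≃g deltaComp G₁ G₂ G₃ v₁ v₂ v₃)) : InDelta (k+1) G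


/-- `v₁v₂v₃` is a main triangle of `G` for level `k`: a triangle whose edge
deletion leaves exactly three connected components, each in `Δ_{k-1}`. -/
def IsMainTriangle (k : ℕ) {V : Type} (G : SimpleGraph V) (v₁ v₂ v₃ : V) : Prop :=
  G.Adj v₁ v₂ ∧ G.Adj v₂ v₃ ∧ G.Adj v₁ v₃ ∧
  (let G' := G.deleteEdges {s(v₁, v₂), s(v₂, v₃), s(v₁, v₃)}
   Nat.card G'.ConnectedComponent = 3 ∧
   ∀ C : G'.ConnectedComponent,
     InDelta (k - 1) (G'.induce {v : V | G'.connectedComponentMk v = C}))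

open SimpleGraph

namespace SimpleGraph

variable {U V W : Type} {H : SimpleGraph U} {G : SimpleGraph V} {K : SimpleGraph W}

theorem Reachable.mem_of_adj_closed {S : Set W} (hS : ∀ ⦃x y⦄, K.Adj x y → x ∈ S → y ∈ S)
    {x y : W} (h : K.Reachable x y) (hx : x ∈ S) : y ∈ S := by
  obtain ⟨p⟩ := h
  induction p with
  | nil => exact hx
  | cons hadj _ ih => exact ih (hS hadj hx)

theorem ConnectedComponent.supp_eq_range (f : H ↪g K) (hH : H.Connected)
    (hf : ∀ ⦃x y⦄, K.Adj x y → x ∈ Set.range f → y ∈ Set.range f) (a : U) :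
    (K.connectedComponentMk (f a)).supp = Set.range f := by
  ext x
  refine ⟨fun hx => (ConnectedComponent.exact hx).symm.mem_of_adj_closed hf ⟨a, rfl⟩, ?_⟩
  rintro ⟨b, rfl⟩
  exact ConnectedComponent.sound ((hH.preconnected b a).map f.toHom)

theorem Connected.natCard_le_natCard_supp (hH : H.Connected) (f : H →g K)
    (hf : Function.Injective f) (a : U) [Finite (K.connectedComponentMk (f a)).supp] :
    Nat.card U ≤ Nat.card (K.connectedComponentMk (f a)).supp :=
  Nat.card_le_card_of_injective
    (fun u => ⟨f u, ConnectedComponent.sound ((hH.preconnected u a).map f)⟩)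
    (fun _ _ h => hf (congrArg Subtype.val h))

def Iso.induceSupp (φ : G ≃g K) (C : G.ConnectedComponent) :
    G.induce C.supp ≃g K.induce (φ.connectedComponentEquiv C).supp where
  toEquiv := C.isoEquivSupp φ
  map_rel_iff' := φ.map_adj_iff

def Iso.deleteEdges (φ : G ≃g K) (s : Set (Sym2 V)) :
    G.deleteEdges s ≃g K.deleteEdges (Sym2.map φ '' s) where
  toEquiv := φ.toEquiv
  map_rel_iff' {a b} := by
    change (K.deleteEdges _).Adj (φ a) (φ b) ↔ _
    rw [deleteEdges_adj, deleteEdges_adj, ← Sym2.map_mk,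
      (Sym2.map.injective φ.injective).mem_set_image, φ.map_adj_iff]

end SimpleGraph

section deltaComp

variable {V₁ V₂ V₃ : Type} {G₁ : SimpleGraph V₁} {G₂ : SimpleGraph V₂} {G₃ : SimpleGraph V₃}
  {v₁ : V₁} {v₂ : V₂} {v₃ : V₃}

theorem deltaComp_connected (h₁ : G₁.Connected) (h₂ : G₂.Connected) (h₃ : G₃.Connected) :
    (deltaComp G₁ G₂ G₃ v₁ v₂ v₃).Connected := by
  set G := deltaComp G₁ G₂ G₃ v₁ v₂ v₃
  rw [connected_iff_exists_forall_reachable]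
  refine ⟨.inl v₁, ?_⟩
  rintro (a | a | a)
  · exact (h₁ v₁ a).map (G' := G) ⟨Sum.inl, id⟩
  · exact (show G.Adj (.inl v₁) (.inr (.inl v₂)) from ⟨rfl, rfl⟩).reachable.trans
      ((h₂ v₂ a).map (G' := G) ⟨fun x => .inr (.inl x), id⟩)
  · exact (show G.Adj (.inl v₁) (.inr (.inr v₃)) from ⟨rfl, rfl⟩).reachable.trans
      ((h₃ v₃ a).map (G' := G) ⟨fun x => .inr (.inr x), id⟩)

theorem deltaComp_deleteEdges_triangle :
    (deltaComp G₁ G₂ G₃ v₁ v₂ v₃).deleteEdges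
        {s(.inl v₁, .inr (.inl v₂)), s(.inr (.inl v₂), .inr (.inr v₃)),
          s(.inl v₁, .inr (.inr v₃))} = G₁ ⊕g (G₂ ⊕g G₃) := by
  ext (a | a | a) (b | b | b) <;> simp [deltaComp]

def deltaComp.rotate : deltaComp G₁ G₂ G₃ v₁ v₂ v₃ ≃g deltaComp G₂ G₃ G₁ v₂ v₃ v₁ where
  toEquiv := (Equiv.sumComm _ _).trans (Equiv.sumAssoc _ _ _)
  map_rel_iff' {a b} := by rcases a with a | a | a <;> rcases b with b | b | b <;> exact Iff.rfl

theorem deltaComp_triangle_cases {x y z : V₁ ⊕ V₂ ⊕ V₃}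
    (hxy : (deltaComp G₁ G₂ G₃ v₁ v₂ v₃).Adj x y)
    (hyz : (deltaComp G₁ G₂ G₃ v₁ v₂ v₃).Adj y z)
    (hxz : (deltaComp G₁ G₂ G₃ v₁ v₂ v₃).Adj x z) :
    ({x, y, z} : Set (V₁ ⊕ V₂ ⊕ V₃)) = {.inl v₁, .inr (.inl v₂), .inr (.inr v₃)} ∨
    (∃ a b c : V₁, x = .inl a ∧ y = .inl b ∧ z = .inl c) ∨
    (∃ a b c : V₂, x = .inr (.inl a) ∧ y = .inr (.inl b) ∧ z = .inr (.inl c)) ∨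
    (∃ a b c : V₃, x = .inr (.inr a) ∧ y = .inr (.inr b) ∧ z = .inr (.inr c)) := by
  rcases x with a | a | a <;> rcases y with b | b | b <;> rcases z with c | c | c <;>
    simp only [deltaComp] at hxy hyz hxz <;> simp_all <;>
    (ext; simp only [Set.mem_insert_iff, Set.mem_singleton_iff]; tauto)

end deltaComp

namespace InDelta

variable {k : ℕ} {V W : Type} {G : SimpleGraph V} {H : SimpleGraph W}

theorem of_iso (h : InDelta k H) (e : G ≃g H) : InDelta k G := by
  cases h with
  | base H e' => exact .base _ (e'.map e.trans)
  | comp H w₁ w₂ w₃ h₁ h₂ h₃ e' => exact .comp _ w₁ w₂ w₃ h₁ h₂ h₃ (e'.map e.trans)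

theorem card (h : InDelta k G) : Nat.card V = 2 * 3 ^ k := by
  induction h with
  | base G e =>
    obtain ⟨f⟩ := e
    simp [Nat.card_congr f.toEquiv]
  | comp G w₁ w₂ w₃ h₁ h₂ h₃ e ih₁ ih₂ ih₃ =>
    obtain ⟨f⟩ := e
    have := Nat.finite_of_card_ne_zero (by rw [ih₁]; positivity)
    have := Nat.finite_of_card_ne_zero (by rw [ih₂]; positivity)
    have := Nat.finite_of_card_ne_zero (by rw [ih₃]; positivity)
    rw [Nat.card_congr f.toEquiv, Nat.card_sum, Nat.card_sum, ih₁, ih₂, ih₃]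
    ring

theorem finite (h : InDelta k G) : Finite V :=
  Nat.finite_of_card_ne_zero (by rw [h.card]; positivity)

theorem connected (h : InDelta k G) : G.Connected := by
  induction h with
  | base G e =>
    obtain ⟨f⟩ := e
    exact f.connected_iff.mpr connected_top
  | comp G w₁ w₂ w₃ h₁ h₂ h₃ e ih₁ ih₂ ih₃ =>
    obtain ⟨f⟩ := e
    exact f.connected_iff.mpr (deltaComp_connected ih₁ ih₂ ih₃)

theorem induce_supp_of_embedding {U : Type} {K : SimpleGraph U} (h : InDelta k H)
    (f : H ↪g K) (hf : ∀ ⦃x y⦄, K.Adj x y → x ∈ Set.range f → y ∈ Set.range f) (a : W) :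
    InDelta k (K.induce (K.connectedComponentMk (f a)).supp) := by
  rw [ConnectedComponent.supp_eq_range f h.connected hf a]
  exact h.of_iso f.isoInduceRange.symm

end InDelta

theorem IsMainTriangle.map {k : ℕ} {V W : Type} {G : SimpleGraph V} {H : SimpleGraph W}
    (φ : G ≃g H) {w₁ w₂ w₃ : V} (h : IsMainTriangle k G w₁ w₂ w₃) :
    IsMainTriangle k H (φ w₁) (φ w₂) (φ w₃) := by
  obtain ⟨h₁₂, h₂₃, h₁₃, hcard, hcomp⟩ := h
  have ψ := φ.deleteEdges {s(w₁, w₂), s(w₂, w₃), s(w₁, w₃)}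
  simp only [Set.image_insert_eq, Set.image_singleton, Sym2.map_mk] at ψ
  refine ⟨φ.map_adj_iff.mpr h₁₂, φ.map_adj_iff.mpr h₂₃, φ.map_adj_iff.mpr h₁₃, ?_, ?_⟩
  · rw [← hcard]
    exact Nat.card_congr ψ.connectedComponentEquiv.symm
  · intro C
    obtain ⟨C, rfl⟩ := ψ.connectedComponentEquiv.surjective C
    exact (hcomp C).of_iso (ψ.induceSupp C).symm

section sum

variable {V₁ V₂ V₃ : Type} {G₁ : SimpleGraph V₁} {G₂ : SimpleGraph V₂} {G₃ : SimpleGraph V₃}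

def sumIndex : V₁ ⊕ V₂ ⊕ V₃ → Fin 3 := Sum.elim (fun _ => 0) (Sum.elim (fun _ => 1) (fun _ => 2))

theorem sumIndex_eq_of_reachable {x y : V₁ ⊕ V₂ ⊕ V₃} (h : (G₁ ⊕g (G₂ ⊕g G₃)).Reachable x y) :
    sumIndex x = sumIndex y :=
  h.mem_of_adj_closed (S := {z | sumIndex x = sumIndex z})
    (by rintro (a | a | a) (b | b | b) hab <;> simp_all [sumIndex]) rfl

theorem natCard_connectedComponent_sum_sum (h₁ : G₁.Connected) (h₂ : G₂.Connected)
    (h₃ : G₃.Connected) : Nat.card (G₁ ⊕g (G₂ ⊕g G₃)).ConnectedComponent = 3 := by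
  obtain ⟨v₁⟩ := h₁.nonempty
  obtain ⟨v₂⟩ := h₂.nonempty
  obtain ⟨v₃⟩ := h₃.nonempty
  let G := G₁ ⊕g (G₂ ⊕g G₃)
  refine Nat.card_eq_of_equiv_fin
    { toFun := Quot.lift sumIndex fun _ _ => sumIndex_eq_of_reachable
      invFun := ![G.connectedComponentMk (.inl v₁), G.connectedComponentMk (.inr (.inl v₂)),
        G.connectedComponentMk (.inr (.inr v₃))]
      left_inv := ConnectedComponent.ind ?_
      right_inv i := by fin_cases i <;> rfl }
  rintro (a | a | a)
  · exact ConnectedComponent.sound ((h₁ v₁ a).map Embedding.sumInl.toHom)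
  · exact ConnectedComponent.sound ((h₂ v₂ a).map (Embedding.sumInr.comp Embedding.sumInl).toHom)
  · exact ConnectedComponent.sound ((h₃ v₃ a).map (Embedding.sumInr.comp Embedding.sumInr).toHom)

theorem InDelta.induce_supp_sum_sum {m : ℕ} (h₁ : InDelta m G₁) (h₂ : InDelta m G₂)
    (h₃ : InDelta m G₃) (C : (G₁ ⊕g (G₂ ⊕g G₃)).ConnectedComponent) :
    InDelta m ((G₁ ⊕g (G₂ ⊕g G₃)).induce C.supp) := by
  obtain ⟨a | a | a, rfl⟩ := C.exists_rep
  · exact h₁.induce_supp_of_embedding Embedding.sumInl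
      (by rintro (b | b | b) (c | c | c) hbc ⟨d, hd⟩ <;> simp_all) a
  · exact h₂.induce_supp_of_embedding (Embedding.sumInr.comp Embedding.sumInl)
      (by rintro (b | b | b) (c | c | c) hbc ⟨d, hd⟩ <;> simp_all) a
  · exact h₃.induce_supp_of_embedding (Embedding.sumInr.comp Embedding.sumInr)
      (by rintro (b | b | b) (c | c | c) hbc ⟨d, hd⟩ <;> simp_all) a

end sum

section deltaComp

variable {V₁ V₂ V₃ : Type} {G₁ : SimpleGraph V₁} {G₂ : SimpleGraph V₂} {G₃ : SimpleGraph V₃}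
  {v₁ : V₁} {v₂ : V₂} {v₃ : V₃} {m : ℕ}

theorem isMainTriangle_deltaComp (h₁ : InDelta m G₁) (h₂ : InDelta m G₂) (h₃ : InDelta m G₃) :
    IsMainTriangle (m + 1) (deltaComp G₁ G₂ G₃ v₁ v₂ v₃)
      (.inl v₁) (.inr (.inl v₂)) (.inr (.inr v₃)) := by
  refine ⟨⟨rfl, rfl⟩, ⟨rfl, rfl⟩, ⟨rfl, rfl⟩, ?_⟩
  dsimp only
  rw [deltaComp_deleteEdges_triangle]
  exact ⟨natCard_connectedComponent_sum_sum h₁.connected h₂.connected h₃.connected,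
    InDelta.induce_supp_sum_sum h₁ h₂ h₃⟩

theorem not_isMainTriangle_deltaComp_inl (h₂ : InDelta m G₂) (h₃ : InDelta m G₃)
    (a b c : V₁) :
    ¬ IsMainTriangle (m + 1) (deltaComp G₁ G₂ G₃ v₁ v₂ v₃) (.inl a) (.inl b) (.inl c) := by
  intro h
  set K := (deltaComp G₁ G₂ G₃ v₁ v₂ v₃).deleteEdges
    {s(.inl a, .inl b), s(.inl b, .inl c), s(.inl a, .inl c)}
  let f : (G₂ ⊕g G₃) ⊔ edge (.inl v₂) (.inr v₃) →g K :=
    ⟨Sum.inr, by rintro (x | x) (y | y) hxy <;> simp [K, deltaComp, edge_adj] at hxy ⊢ <;> tauto⟩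
  have hC : InDelta m (K.induce (K.connectedComponentMk (f (.inl v₂))).supp) := h.2.2.2.2 _
  have := hC.finite
  have := h₂.finite
  have := h₃.finite
  have hle := (h₂.connected.sum_sup_edge h₃.connected).natCard_le_natCard_supp f
    Sum.inr_injective (.inl v₂)
  rw [Nat.card_sum, h₂.card, h₃.card, hC.card] at hle
  have : 0 < 3 ^ m := by positivity
  omega

theorem eq_triangle_of_isMainTriangle_deltaComp (h₁ : InDelta m G₁) (h₂ : InDelta m G₂)
    (h₃ : InDelta m G₃) {w₁ w₂ w₃ : V₁ ⊕ V₂ ⊕ V₃}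
    (hw : IsMainTriangle (m + 1) (deltaComp G₁ G₂ G₃ v₁ v₂ v₃) w₁ w₂ w₃) :
    ({w₁, w₂, w₃} : Set (V₁ ⊕ V₂ ⊕ V₃)) = {.inl v₁, .inr (.inl v₂), .inr (.inr v₃)} := by
  obtain h | ⟨a, b, c, rfl, rfl, rfl⟩ | ⟨a, b, c, rfl, rfl, rfl⟩ | ⟨a, b, c, rfl, rfl, rfl⟩ :=
    deltaComp_triangle_cases hw.1 hw.2.1 hw.2.2.1
  · exact h
  · exact absurd hw (not_isMainTriangle_deltaComp_inl h₂ h₃ a b c)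
  · exact absurd (hw.map deltaComp.rotate) (not_isMainTriangle_deltaComp_inl h₃ h₁ a b c)
  · exact absurd (hw.map (deltaComp.rotate.trans deltaComp.rotate))
      (not_isMainTriangle_deltaComp_inl h₁ h₂ a b c)

end deltaComp

theorem delta_main_triangle_unique_general {V : Type}
    (k : ℕ) (hk : 1 ≤ k) (G : SimpleGraph V) (hG : InDelta k G) :
    ∃ v₁ v₂ v₃ : V, IsMainTriangle k G v₁ v₂ v₃ ∧
      ∀ w₁ w₂ w₃ : V, IsMainTriangle k G w₁ w₂ w₃ →
        ({w₁, w₂, w₃} : Set V) = ({v₁, v₂, v₃} : Set V) := by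
  obtain ⟨m, rfl⟩ : ∃ m, k = m + 1 := ⟨k - 1, by omega⟩
  cases hG with | comp _ u₁ u₂ u₃ h₁ h₂ h₃ e => ?_
  obtain ⟨f⟩ := e
  refine ⟨f.symm (.inl u₁), f.symm (.inr (.inl u₂)), f.symm (.inr (.inr u₃)),
    (isMainTriangle_deltaComp h₁ h₂ h₃).map f.symm, fun w₁ w₂ w₃ hw => ?_⟩
  have := congrArg (f.symm '' ·) (eq_triangle_of_isMainTriangle_deltaComp h₁ h₂ h₃ (hw.map f))
  simpa [Set.image_insert_eq] using this

theorem delta_main_triangle_unique {V : Type} [Fintype V] [DecidableEq V]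
    (k : ℕ) (hk : 1 ≤ k) (G : SimpleGraph V) (hG : InDelta k G) :
    ∃ v₁ v₂ v₃ : V, IsMainTriangle k G v₁ v₂ v₃ ∧
      ∀ w₁ w₂ w₃ : V, IsMainTriangle k G w₁ w₂ w₃ →
        ({w₁, w₂, w₃} : Set V) = ({v₁, v₂, v₃} : Set V) :=
  delta_main_triangle_unique_general k hk G hG
end
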